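/- arXiv:0803.3208 — 2 statements merged into one kernel-verified Lean document; each statement's English description precedes it below -/
import Mathlib

section
/- First-derivative estimate for the symbol H(ξ) = |ξ|√(2+|ξ|²): there are absolute constants 0 < c ≤ C such that for all ξ, η ∈ ℝ³ \ {0} with |ξ| ≥ |η|, c [ (|ξ|/⟨ξ⟩)(|ξ| − |η|) + ⟨η⟩ |ξ/|ξ| − η/|η|| ] ≤ |∇H(ξ) − ∇H(η)| ≤ C [ (|ξ|/⟨ξ⟩)(|ξ| − |η|) + ⟨η⟩ |ξ/|ξ| − η/|η|| ]. -/
/-!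
`H` is radial with profile `h(r) = r⟨r⟩`, so `∇H(ξ) = h'(|ξ|) ξ/|ξ|` with
`h'(r) = 2(1 + r²)/⟨r⟩`, which lies between `⟨r⟩` and `2⟨r⟩`. For unit vectors `u, v`,
`|a u - b v|² = (a - b)² + ab |u - v|²`, so with `s ≤ r` it suffices to compare
`h'(r) - h'(s)` with `(r/⟨r⟩)(r - s)`, and `h'(r)h'(s)|u - v|²` with the square of the right-hand
side. The first comparison follows from `(h'(r) - h'(s))⟨r⟩⟨s⟩ = 2(⟨r⟩ - ⟨s⟩)(⟨r⟩⟨s⟩ + 1)` and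
`⟨r⟩ - ⟨s⟩ = (r² - s²)/(⟨r⟩ + ⟨s⟩)`. For the second, `⟨r⟩⟨s⟩ ≤ 2⟨s⟩²` unless `⟨r⟩ > 2⟨s⟩`; in that
case `r > 2s`, hence `⟨r⟩ ≤ 4 (r/⟨r⟩)(r - s)`, and this absorbs the angular term since `|u - v| ≤ 2`.
-/

noncomputable section

open scoped RealInnerProductSpace

abbrev V3 := EuclideanSpace ℝ (Fin 3)

/-- `⟨ξ⟩ = √(2+‖ξ‖²)` -/
def jap (x : V3) : ℝ := Real.sqrt (2 + ‖x‖ ^ 2)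

/-- the symbol `H(ξ) = |ξ|√(2+|ξ|²)` -/
def Hfun (ξ : V3) : ℝ := ‖ξ‖ * jap ξ

section Radial

variable {F : Type*} [NormedAddCommGroup F] [InnerProductSpace ℝ F]

theorem hasFDerivAt_norm_of_ne_zero {x : F} (hx : x ≠ 0) :
    HasFDerivAt (‖·‖) (‖x‖⁻¹ • innerSL ℝ x) x := by
  have hsq : ‖x‖ ^ 2 ≠ 0 := by positivity
  convert ((hasStrictFDerivAt_norm_sq x).hasFDerivAt.sqrt hsq) using 1
  · simp [Real.sqrt_sq (norm_nonneg _)]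
  · ext y
    simp [Real.sqrt_sq (norm_nonneg x)]
    field_simp

theorem HasDerivAt.hasGradientAt_comp_norm [CompleteSpace F] {f : ℝ → ℝ} {f' : ℝ} {x : F}
    (hf : HasDerivAt f f' ‖x‖) (hx : x ≠ 0) :
    HasGradientAt (fun y => f ‖y‖) (f' • ‖x‖⁻¹ • x) x := by
  rw [hasGradientAt_iff_hasFDerivAt]
  refine (hf.comp_hasFDerivAt x (hasFDerivAt_norm_of_ne_zero hx)).congr_fderiv ?_
  ext y
  simp

end Radial

-- `jap x` and `Hfun x` are definitionally `japR ‖x‖` and `‖x‖ * japR ‖x‖`.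
def japR (r : ℝ) : ℝ := √(2 + r ^ 2)

def radialHDeriv (r : ℝ) : ℝ := 2 * (1 + r ^ 2) / japR r

section Scalar

variable {r s : ℝ}

theorem japR_pos (r : ℝ) : 0 < japR r := Real.sqrt_pos.mpr (by positivity)

theorem sq_japR (r : ℝ) : japR r ^ 2 = 2 + r ^ 2 := Real.sq_sqrt (by positivity)

theorem hasDerivAt_japR (r : ℝ) : HasDerivAt japR (r / japR r) r := by
  have h : HasDerivAt (fun t => 2 + t ^ 2) (2 * r) r := by
    simpa using (hasDerivAt_pow 2 r).const_add 2
  refine (h.sqrt (by positivity)).congr_deriv ?_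
  simp only [japR]
  field_simp

theorem hasDerivAt_mul_japR (r : ℝ) : HasDerivAt (fun t => t * japR t) (radialHDeriv r) r := by
  refine ((hasDerivAt_id' r).mul (hasDerivAt_japR r)).congr_deriv ?_
  have := japR_pos r
  unfold radialHDeriv
  field_simp
  linear_combination sq_japR r

theorem japR_le_japR (hs : 0 ≤ s) (hsr : s ≤ r) : japR s ≤ japR r := by
  unfold japR; gcongr

theorem japR_le_radialHDeriv (r : ℝ) : japR r ≤ radialHDeriv r := by
  rw [radialHDeriv, le_div_iff₀ (japR_pos r), ← sq, sq_japR]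
  nlinarith [sq_nonneg r]

theorem radialHDeriv_le_two_mul_japR (r : ℝ) : radialHDeriv r ≤ 2 * japR r := by
  rw [radialHDeriv, div_le_iff₀ (japR_pos r), mul_assoc, ← sq, sq_japR]
  linarith

theorem radialHDeriv_sub_mul_japR_mul_japR (r s : ℝ) :
    (radialHDeriv r - radialHDeriv s) * (japR r * japR s)
      = 2 * (japR r - japR s) * (japR r * japR s + 1) := by
  have := japR_pos r
  have := japR_pos s
  unfold radialHDeriv
  field_simp
  linear_combination japR r * sq_japR s - japR s * sq_japR r

theorem japR_sub_japR_bounds (hs : 0 ≤ s) (hsr : s ≤ r) :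
    r / japR r * (r - s) ≤ 2 * (japR r - japR s) ∧
      japR r - japR s ≤ 2 * (r / japR r * (r - s)) := by
  have hA := japR_pos r
  have hBA := japR_le_japR hs hsr
  have hPA : r / japR r * (r - s) * japR r = r * (r - s) := by field_simp
  have hdiff : (japR r - japR s) * (japR r + japR s) = (r - s) * (r + s) := by
    linear_combination sq_japR r - sq_japR s
  constructor
  · refine le_of_mul_le_mul_right ?_ hA
    nlinarith
  · refine le_of_mul_le_mul_right ?_ hA
    nlinarith [mul_nonneg (sub_nonneg.2 hBA) (japR_pos s).le, mul_self_nonneg (r - s)]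

theorem radialHDeriv_sub_bounds (hs : 0 ≤ s) (hsr : s ≤ r) :
    r / japR r * (r - s) ≤ radialHDeriv r - radialHDeriv s ∧
      radialHDeriv r - radialHDeriv s ≤ 6 * (r / japR r * (r - s)) := by
  have hA := japR_pos r
  have hB := japR_pos s
  have hBA := japR_le_japR hs hsr
  have hAB : 2 ≤ japR r * japR s := by nlinarith [sq_japR s, sq_nonneg s]
  have key := radialHDeriv_sub_mul_japR_mul_japR r s
  obtain ⟨hlow, hup⟩ := japR_sub_japR_bounds hs hsr
  constructor
  · refine hlow.trans (le_of_mul_le_mul_right ?_ (mul_pos hA hB))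
    nlinarith
  · calc radialHDeriv r - radialHDeriv s ≤ 3 * (japR r - japR s) :=
          le_of_mul_le_mul_right (by nlinarith) (mul_pos hA hB)
      _ ≤ 6 * (r / japR r * (r - s)) := by linarith

theorem japR_le_four_mul_of_two_mul_japR_lt (hs : 0 ≤ s) (hsr : s ≤ r)
    (h : 2 * japR s < japR r) : japR r ≤ 4 * (r / japR r * (r - s)) := by
  have hA := japR_pos r
  have hsq : 6 + 4 * s ^ 2 < r ^ 2 := by
    nlinarith [sq_japR r, sq_japR s, japR_pos s]
  have hrs : 2 * s < r := by nlinarith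
  rw [← mul_le_mul_iff_of_pos_right hA]
  have hPA : 4 * (r / japR r * (r - s)) * japR r = 4 * (r * (r - s)) := by field_simp
  rw [hPA, ← sq, sq_japR]
  nlinarith

theorem japR_mul_japR_mul_sq_le {d : ℝ} (hs : 0 ≤ s) (hsr : s ≤ r) (hd : 0 ≤ d) (hd2 : d ≤ 2) :
    japR r * japR s * d ^ 2 ≤ 2 * (japR s * d) ^ 2 + 64 * (r / japR r * (r - s)) ^ 2 := by
  have hA := japR_pos r
  have hB := japR_pos s
  have hBA := japR_le_japR hs hsr
  rcases le_or_gt (japR r) (2 * japR s) with hsmall | hlarge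
  · have : japR r * japR s * d ^ 2 ≤ 2 * japR s * japR s * d ^ 2 := by gcongr
    nlinarith [sq_nonneg (r / japR r * (r - s))]
  · have hAP := japR_le_four_mul_of_two_mul_japR_lt hs hsr hlarge
    have h1 : japR r * japR s * d ^ 2 ≤ japR r * japR r * 2 ^ 2 := by gcongr
    have h2 : japR r * japR r ≤ (4 * (r / japR r * (r - s))) * (4 * (r / japR r * (r - s))) :=
      mul_self_le_mul_self hA.le hAP
    nlinarith [sq_nonneg (japR s * d)]

end Scalar

theorem norm_sub_le_two_of_norm_eq_one {E : Type*} [SeminormedAddCommGroup E] {u v : E}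
    (hu : ‖u‖ = 1) (hv : ‖v‖ = 1) : ‖u - v‖ ≤ 2 := by
  linarith [norm_sub_le u v]

section UnitVectors

variable {F : Type*} [NormedAddCommGroup F] [InnerProductSpace ℝ F] {u v : F}

theorem norm_smul_sub_smul_sq_of_norm_eq_one (hu : ‖u‖ = 1) (hv : ‖v‖ = 1) (a b : ℝ) :
    ‖a • u - b • v‖ ^ 2 = (a - b) ^ 2 + a * b * ‖u - v‖ ^ 2 := by
  rw [norm_sub_sq_real, norm_sub_sq_real, norm_smul, norm_smul, real_inner_smul_left,
    real_inner_smul_right, hu, hv, Real.norm_eq_abs, Real.norm_eq_abs, mul_pow, mul_pow, sq_abs,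
    sq_abs]
  ring

variable {r s : ℝ}

theorem half_mul_le_norm_radialHDeriv_smul_sub (hu : ‖u‖ = 1) (hv : ‖v‖ = 1) (hs : 0 ≤ s)
    (hsr : s ≤ r) :
    1 / 2 * (r / japR r * (r - s) + japR s * ‖u - v‖)
      ≤ ‖radialHDeriv r • u - radialHDeriv s • v‖ := by
  obtain ⟨hP, -⟩ := radialHDeriv_sub_bounds hs hsr
  have hP0 : 0 ≤ r / japR r * (r - s) :=
    mul_nonneg (div_nonneg (hs.trans hsr) (japR_pos r).le) (sub_nonneg.2 hsr)
  have hBa : japR s ≤ radialHDeriv r := (japR_le_japR hs hsr).trans (japR_le_radialHDeriv r)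
  have hBb := japR_le_radialHDeriv s
  have hB := japR_pos s
  have hQ : (japR s * ‖u - v‖) ^ 2
      ≤ radialHDeriv r * radialHDeriv s * ‖u - v‖ ^ 2 := by
    rw [mul_pow, sq (japR s)]
    exact mul_le_mul_of_nonneg_right (mul_le_mul hBa hBb hB.le (hB.le.trans hBa)) (sq_nonneg _)
  refine le_of_pow_le_pow_left₀ two_ne_zero (norm_nonneg _) ?_
  rw [norm_smul_sub_smul_sq_of_norm_eq_one hu hv]
  nlinarith [sq_nonneg (r / japR r * (r - s) - japR s * ‖u - v‖)]

theorem norm_radialHDeriv_smul_sub_le (hu : ‖u‖ = 1) (hv : ‖v‖ = 1) (hs : 0 ≤ s)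
    (hsr : s ≤ r) :
    ‖radialHDeriv r • u - radialHDeriv s • v‖
      ≤ 18 * (r / japR r * (r - s) + japR s * ‖u - v‖) := by
  obtain ⟨hP, hP6⟩ := radialHDeriv_sub_bounds hs hsr
  have hP0 : 0 ≤ r / japR r * (r - s) :=
    mul_nonneg (div_nonneg (hs.trans hsr) (japR_pos r).le) (sub_nonneg.2 hsr)
  have hQ0 : 0 ≤ japR s * ‖u - v‖ := mul_nonneg (japR_pos s).le (norm_nonneg _)
  have hab : radialHDeriv r * radialHDeriv s ≤ 2 * japR r * (2 * japR s) :=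
    mul_le_mul (radialHDeriv_le_two_mul_japR r) (radialHDeriv_le_two_mul_japR s)
      ((japR_pos s).trans_le (japR_le_radialHDeriv s)).le (by linarith [japR_pos r])
  have hAB := japR_mul_japR_mul_sq_le hs hsr (norm_nonneg (u - v))
    (norm_sub_le_two_of_norm_eq_one hu hv)
  refine le_of_pow_le_pow_left₀ two_ne_zero (by positivity) ?_
  rw [norm_smul_sub_smul_sq_of_norm_eq_one hu hv]
  nlinarith [mul_le_mul_of_nonneg_right hab (sq_nonneg ‖u - v‖)]

end UnitVectors

theorem gradient_Hfun {x : V3} (hx : x ≠ 0) :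
    gradient Hfun x = radialHDeriv ‖x‖ • ‖x‖⁻¹ • x :=
  ((hasDerivAt_mul_japR ‖x‖).hasGradientAt_comp_norm hx).gradient

/-- First-derivative estimate for the symbol `H(ξ) = |ξ|√(2+|ξ|²)`: for `|ξ| ≥ |η|`,
`|∇H(ξ) - ∇H(η)| ≍ (|ξ|/⟨ξ⟩)(|ξ|-|η|) + ⟨η⟩|ξ/|ξ| - η/|η||`, with absolute constants. -/
theorem gradient_Hfun_first_estimate :
    ∃ c C : ℝ, 0 < c ∧ c ≤ C ∧ ∀ ξ η : V3, ξ ≠ 0 → η ≠ 0 → ‖η‖ ≤ ‖ξ‖ →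
      c * (‖ξ‖ / jap ξ * (‖ξ‖ - ‖η‖) + jap η * ‖‖ξ‖⁻¹ • ξ - ‖η‖⁻¹ • η‖)
          ≤ ‖gradient Hfun ξ - gradient Hfun η‖ ∧
      ‖gradient Hfun ξ - gradient Hfun η‖
          ≤ C * (‖ξ‖ / jap ξ * (‖ξ‖ - ‖η‖) + jap η * ‖‖ξ‖⁻¹ • ξ - ‖η‖⁻¹ • η‖) := by
  refine ⟨1 / 2, 18, by norm_num, by norm_num, fun ξ η hξ hη hηξ => ?_⟩
  rw [gradient_Hfun hξ, gradient_Hfun hη]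
  have hu : ‖‖ξ‖⁻¹ • ξ‖ = 1 := norm_smul_inv_norm hξ
  have hv : ‖‖η‖⁻¹ • η‖ = 1 := norm_smul_inv_norm hη
  exact ⟨half_mul_le_norm_radialHDeriv_smul_sub hu hv (norm_nonneg η) hηξ,
    norm_radialHDeriv_smul_sub_le hu hv (norm_nonneg η) hηξ⟩
end
end

section
/- Higher-derivative estimates for the symbol H(ξ) = |ξ|√(2+|ξ|²): for each k ∈ ℕ, k ≥ 1, there is a constant C_k such that (i) ‖∇^k H(ξ)‖ ≤ C_k ⟨ξ⟩ / |ξ|^{k−1} for all ξ ∈ ℝ³ \ {0}, and (ii) ‖∇^k H(ξ) − ∇^k H(η)‖ ≤ C_k ⟨ξ⟩ |ξ − η| / (|ξ| |η|^{k−1}) for all ξ, η ∈ ℝ³ \ {0} with |ξ| ≥ |η|, where ∇^k H is the k-th (Fréchet) derivative tensor and ‖·‖ its operator norm. -/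
noncomputable section

/-!
The Euclidean norm is smooth away from `0` and positively homogeneous of degree one, so its
`n`-th derivative is homogeneous of degree `1 - n`; bounding it on the unit sphere by compactness
gives `‖∇ⁿ‖x‖‖ ≲ ‖x‖^(1-n)`. Since `⟨ξ⟩` is the norm of `(ξ, √2)` in `ℝ³ × ℝ`, the same bound
transfers to `‖∇ⁿ⟨ξ⟩‖ ≲ ⟨ξ⟩^(1-n) ≤ ⟨ξ⟩ ‖ξ‖^(-n)`, and Leibniz' rule gives
`‖∇ᵏH(ξ)‖ ≲ ⟨ξ⟩ ‖ξ‖^(1-k)`.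

For the difference, if `‖η‖ ≤ 2‖ξ - η‖` then `‖ξ‖ ≤ 3‖ξ - η‖` and the triangle inequality
suffices. Otherwise the mean value theorem on the convex set `B̄(η, ‖ξ - η‖) ∩ B̄(0, ‖ξ‖)`, on which
`‖η‖/2 ≤ ‖ζ‖ ≤ ‖ξ‖`, reduces the estimate to the bound for `∇ᵏ⁺¹H`.
-/

open Set
open scoped ContDiff

section Homogeneous

variable {𝕜 E F : Type*} [NontriviallyNormedField 𝕜] [NormedAddCommGroup E] [NormedSpace 𝕜 E]
  [NormedAddCommGroup F] [NormedSpace 𝕜 F]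

theorem pow_smul_iteratedFDeriv_smul_eq {f : E → F} {c : 𝕜} (hc : c ≠ 0)
    (hf : ∀ y, f (c • y) = c • f y) {n : ℕ} {x : E} (hfx : ContDiffAt 𝕜 n f x) :
    c ^ n • iteratedFDeriv 𝕜 n f (c • x) = c • iteratedFDeriv 𝕜 n f x := by
  let g : E ≃L[𝕜] E := ContinuousLinearEquiv.smulLeft (Units.mk0 c hc)
  have hcomp := g.iteratedFDerivWithin_comp_right f uniqueDiffOn_univ (mem_univ (g x)) n
  have hfg : f ∘ g = fun y => c • f y := funext hf
  rw [preimage_univ, iteratedFDerivWithin_univ, iteratedFDerivWithin_univ, hfg,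
    iteratedFDeriv_const_smul_apply' hfx] at hcomp
  rw [hcomp]
  ext m
  simp [g, ContinuousMultilinearMap.map_smul_univ]

end Homogeneous

theorem exists_norm_iteratedFDeriv_norm_mul_pow_le {E : Type*} [NormedAddCommGroup E]
    [InnerProductSpace ℝ E] [FiniteDimensional ℝ E] (n : ℕ) :
    ∃ C > 0, ∀ x : E, x ≠ 0 → ‖iteratedFDeriv ℝ n (‖·‖) x‖ * ‖x‖ ^ n ≤ C * ‖x‖ := by
  have hcont : ContinuousOn (fun u : E => ‖iteratedFDeriv ℝ n (‖·‖) u‖) (Metric.sphere 0 1) :=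
    fun u hu => (ContDiffAt.continuousAt_iteratedFDeriv
      (contDiffAt_norm ℝ (ne_zero_of_mem_unit_sphere ⟨u, hu⟩)) le_rfl).norm.continuousWithinAt
  obtain ⟨C, hC⟩ := (isCompact_sphere (0 : E) 1).exists_bound_of_continuousOn hcont
  refine ⟨max C 1, by positivity, fun x hx => ?_⟩
  have hx0 : 0 < ‖x‖ := norm_pos_iff.2 hx
  set u := ‖x‖⁻¹ • x
  have hu : u ∈ Metric.sphere (0 : E) 1 := by simp [u, norm_smul, hx0.ne']
  have hxu : ‖x‖ • u = x := smul_inv_smul₀ hx0.ne' x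
  have hhom := congrArg norm <| pow_smul_iteratedFDeriv_smul_eq (f := (‖·‖)) hx0.ne'
    (fun y => by simp [norm_smul]) (n := n)
    (contDiffAt_norm ℝ (ne_zero_of_mem_unit_sphere ⟨u, hu⟩))
  rw [norm_smul, norm_smul, hxu, norm_pow, Real.norm_of_nonneg hx0.le] at hhom
  calc ‖iteratedFDeriv ℝ n (‖·‖) x‖ * ‖x‖ ^ n = ‖x‖ * ‖iteratedFDeriv ℝ n (‖·‖) u‖ := by
        rw [mul_comm, hhom]
    _ ≤ ‖x‖ * max C 1 := by
        gcongr
        exact (norm_norm (iteratedFDeriv ℝ n (‖·‖) u) ▸ hC u hu).trans (le_max_left _ _)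
    _ = max C 1 * ‖x‖ := mul_comm _ _

section Affine

variable {𝕜 E F G : Type*} [NontriviallyNormedField 𝕜] [NormedAddCommGroup E] [NormedSpace 𝕜 E]
  [NormedAddCommGroup F] [NormedSpace 𝕜 F] [NormedAddCommGroup G] [NormedSpace 𝕜 G]

theorem norm_iteratedFDeriv_comp_affine_le {n : ℕ} {f : F → G} {s : Set F} (hs : IsOpen s)
    (hf : ContDiffOn 𝕜 n f s) (L : E →L[𝕜] F) (hL : ‖L‖ ≤ 1) (c : F) {x : E}
    (hx : L x + c ∈ s) :
    ‖iteratedFDeriv 𝕜 n (fun y => f (L y + c)) x‖ ≤ ‖iteratedFDeriv 𝕜 n f (L x + c)‖ := by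
  set t := (· + c) ⁻¹' s
  have ht : IsOpen t := hs.preimage (continuous_add_const c)
  have hg : ContDiffOn 𝕜 n (fun z => f (z + c)) t :=
    hf.comp (contDiffOn_id.add contDiffOn_const) (mapsTo_preimage _ _)
  have hcomp := L.iteratedFDerivWithin_comp_right hg ht.uniqueDiffOn
    (ht.preimage L.continuous).uniqueDiffOn hx le_rfl
  rw [iteratedFDerivWithin_of_isOpen n (ht.preimage L.continuous) hx,
    iteratedFDerivWithin_of_isOpen n ht hx, iteratedFDeriv_comp_add_right] at hcomp
  calc ‖iteratedFDeriv 𝕜 n (fun y => f (L y + c)) x‖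
      ≤ ‖iteratedFDeriv 𝕜 n f (L x + c)‖ * ∏ _ : Fin n, ‖L‖ :=
        hcomp ▸ ContinuousMultilinearMap.norm_compContinuousLinearMap_le _ _
    _ ≤ ‖iteratedFDeriv 𝕜 n f (L x + c)‖ := by
        apply mul_le_of_le_one_right (norm_nonneg _)
        exact Finset.prod_le_one (fun _ _ => norm_nonneg L) (fun _ _ => hL)

end Affine

section Leibniz

variable {𝕜 E 𝔸 : Type*} [NontriviallyNormedField 𝕜] [NormedAddCommGroup E] [NormedSpace 𝕜 E]
  [NormedRing 𝔸] [NormedAlgebra 𝕜 𝔸]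

theorem norm_iteratedFDeriv_mul_mul_pow_le {f g : E → 𝔸} {s : Set E} (hs : IsOpen s)
    {n : ℕ} (hf : ContDiffOn 𝕜 n f s) (hg : ContDiffOn 𝕜 n g s) {x : E} (hx : x ∈ s)
    {r a b : ℝ} {A B : ℕ → ℝ} (hr : 0 ≤ r)
    (hfA : ∀ i ≤ n, ‖iteratedFDeriv 𝕜 i f x‖ * r ^ i ≤ A i * a)
    (hgB : ∀ i ≤ n, ‖iteratedFDeriv 𝕜 i g x‖ * r ^ i ≤ B i * b) :
    ‖iteratedFDeriv 𝕜 n (fun y => f y * g y) x‖ * r ^ n ≤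
      (∑ i ∈ Finset.range (n + 1), n.choose i * A i * B (n - i)) * (a * b) := by
  have hleib := norm_iteratedFDerivWithin_mul_le hf hg hs.uniqueDiffOn hx le_rfl
  simp only [iteratedFDerivWithin_of_isOpen _ hs hx] at hleib
  rw [Finset.sum_mul]
  refine (mul_le_mul_of_nonneg_right hleib (by positivity)).trans ?_
  rw [Finset.sum_mul]
  refine Finset.sum_le_sum fun i hi => ?_
  have hin : i ≤ n := Nat.lt_succ_iff.1 (Finset.mem_range.1 hi)
  have hfi := hfA i hin
  have hgi := hgB (n - i) (Nat.sub_le n i)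
  calc (n.choose i : ℝ) * ‖iteratedFDeriv 𝕜 i f x‖ * ‖iteratedFDeriv 𝕜 (n - i) g x‖ * r ^ n
      = n.choose i * ((‖iteratedFDeriv 𝕜 i f x‖ * r ^ i) *
          (‖iteratedFDeriv 𝕜 (n - i) g x‖ * r ^ (n - i))) := by
        rw [← pow_mul_pow_sub r hin]
        ring
    _ ≤ n.choose i * ((A i * a) * (B (n - i) * b)) := by
        gcongr
        · exact (by positivity : (0:ℝ) ≤ _).trans hfi
    _ = n.choose i * A i * B (n - i) * (a * b) := by ring

end Leibniz

section Difference

variable {E W : Type*} [NormedAddCommGroup E] [NormedAddCommGroup W] {F : E → W} {w : E → ℝ}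
  {k : ℕ} {ξ η : E}

theorem norm_sub_mul_le_of_norm_le_two_mul_norm_sub
    (hw : ∀ x y : E, ‖x‖ ≤ ‖y‖ → w x ≤ w y) (hF : ∀ ζ, ζ ≠ 0 → ‖F ζ‖ * ‖ζ‖ ^ k ≤ w ζ)
    (hη : η ≠ 0) (hle : ‖η‖ ≤ ‖ξ‖) (hfar : ‖η‖ ≤ 2 * ‖ξ - η‖) :
    ‖F ξ - F η‖ * (‖ξ‖ * ‖η‖ ^ k) ≤ 6 * w ξ * ‖ξ - η‖ := by
  have hξ : ξ ≠ 0 := norm_pos_iff.1 ((norm_pos_iff.2 hη).trans_le hle)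
  have hFξ : ‖F ξ‖ * ‖η‖ ^ k ≤ w ξ := le_trans (by gcongr) (hF ξ hξ)
  have hFη : ‖F η‖ * ‖η‖ ^ k ≤ w ξ := (hF η hη).trans (hw η ξ hle)
  have hξ3 : ‖ξ‖ ≤ 3 * ‖ξ - η‖ := by linarith [norm_le_norm_add_norm_sub' ξ η]
  calc ‖F ξ - F η‖ * (‖ξ‖ * ‖η‖ ^ k) ≤ (‖F ξ‖ * ‖η‖ ^ k + ‖F η‖ * ‖η‖ ^ k) * ‖ξ‖ := by
        rw [← add_mul, mul_left_comm, mul_comm]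
        gcongr
        exact norm_sub_le _ _
    _ ≤ (2 * w ξ) * (3 * ‖ξ - η‖) := by
        gcongr
        · linarith [le_trans (by positivity : (0 : ℝ) ≤ ‖F ξ‖ * ‖η‖ ^ k) hFξ]
        · linarith
    _ = 6 * w ξ * ‖ξ - η‖ := by ring

variable [NormedSpace ℝ E] [NormedSpace ℝ W]

theorem norm_sub_mul_le_of_two_mul_norm_sub_lt
    (hw : ∀ x y : E, ‖x‖ ≤ ‖y‖ → w x ≤ w y) (hdiff : ∀ ζ, ζ ≠ 0 → DifferentiableAt ℝ F ζ)
    (hdF : ∀ ζ, ζ ≠ 0 → ‖fderiv ℝ F ζ‖ * ‖ζ‖ ^ (k + 1) ≤ w ζ)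
    (hη : η ≠ 0) (hle : ‖η‖ ≤ ‖ξ‖) (hnear : 2 * ‖ξ - η‖ < ‖η‖) :
    ‖F ξ - F η‖ * (‖ξ‖ * ‖η‖ ^ k) ≤ 3 * 2 ^ k * w ξ * ‖ξ - η‖ := by
  have hη0 : 0 < ‖η‖ := norm_pos_iff.2 hη
  have hw0 : 0 ≤ w ξ := le_trans (by positivity) ((hdF η hη).trans (hw η ξ hle))
  set s := Metric.closedBall η ‖ξ - η‖ ∩ Metric.closedBall 0 ‖ξ‖
  have hmem (ζ : E) (hζ : ζ ∈ s) : ‖η‖ / 2 ≤ ‖ζ‖ ∧ ‖ζ‖ ≤ ‖ξ‖ := by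
    rw [mem_inter_iff, Metric.mem_closedBall, Metric.mem_closedBall, dist_eq_norm,
      dist_zero_right] at hζ
    exact ⟨by linarith [norm_le_norm_add_norm_sub' η ζ, norm_sub_rev η ζ], hζ.2⟩
  set M := w ξ / (‖η‖ / 2) ^ (k + 1)
  have hbound (ζ : E) (hζ : ζ ∈ s) : ‖fderiv ℝ F ζ‖ ≤ M := by
    obtain ⟨hlow, hup⟩ := hmem ζ hζ
    have hζ : ζ ≠ 0 := norm_pos_iff.1 (by linarith)
    rw [le_div_iff₀ (by positivity)]
    exact le_trans (by gcongr) ((hdF ζ hζ).trans (hw ζ ξ hup))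
  have hηs : η ∈ s := ⟨Metric.mem_closedBall_self (norm_nonneg _), by simpa using hle⟩
  have hξs : ξ ∈ s := ⟨by simp [dist_eq_norm], by simp⟩
  have hconv : Convex ℝ s := (convex_closedBall η _).inter (convex_closedBall 0 _)
  have hmv := hconv.norm_image_sub_le_of_norm_fderiv_le
    (fun ζ hζ => hdiff ζ (norm_pos_iff.1 (by linarith [hmem ζ hζ]))) hbound hηs hξs
  have hξη : ‖ξ‖ / ‖η‖ ≤ 3 / 2 := by
    rw [div_le_iff₀ hη0]; linarith [norm_le_norm_add_norm_sub' ξ η]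
  calc ‖F ξ - F η‖ * (‖ξ‖ * ‖η‖ ^ k) ≤ M * ‖ξ - η‖ * (‖ξ‖ * ‖η‖ ^ k) := by gcongr
    _ = 2 ^ (k + 1) * w ξ * ‖ξ - η‖ * (‖ξ‖ / ‖η‖) := by
        simp only [M, div_pow]
        field_simp
        ring
    _ ≤ 2 ^ (k + 1) * w ξ * ‖ξ - η‖ * (3 / 2) := by gcongr
    _ = 3 * 2 ^ k * w ξ * ‖ξ - η‖ := by ring

theorem norm_sub_mul_le_of_norm_fderiv_mul_pow_le
    (hw : ∀ x y : E, ‖x‖ ≤ ‖y‖ → w x ≤ w y) (hF : ∀ ζ, ζ ≠ 0 → ‖F ζ‖ * ‖ζ‖ ^ k ≤ w ζ)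
    (hdiff : ∀ ζ, ζ ≠ 0 → DifferentiableAt ℝ F ζ)
    (hdF : ∀ ζ, ζ ≠ 0 → ‖fderiv ℝ F ζ‖ * ‖ζ‖ ^ (k + 1) ≤ w ζ)
    (hη : η ≠ 0) (hle : ‖η‖ ≤ ‖ξ‖) :
    ‖F ξ - F η‖ * (‖ξ‖ * ‖η‖ ^ k) ≤ 3 * 2 ^ (k + 1) * w ξ * ‖ξ - η‖ := by
  have hw0 : 0 ≤ w ξ * ‖ξ - η‖ :=
    mul_nonneg (le_trans (by positivity) ((hF η hη).trans (hw η ξ hle))) (norm_nonneg _)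
  have h2k : (1 : ℝ) ≤ 2 ^ k := one_le_pow₀ one_le_two
  rcases le_or_gt ‖η‖ (2 * ‖ξ - η‖) with hfar | hnear
  · calc _ ≤ 6 * w ξ * ‖ξ - η‖ := norm_sub_mul_le_of_norm_le_two_mul_norm_sub hw hF hη hle hfar
      _ ≤ 3 * 2 ^ (k + 1) * w ξ * ‖ξ - η‖ := by rw [pow_succ]; nlinarith
  · calc _ ≤ 3 * 2 ^ k * w ξ * ‖ξ - η‖ :=
          norm_sub_mul_le_of_two_mul_norm_sub_lt hw hdiff hdF hη hle hnear
      _ ≤ 3 * 2 ^ (k + 1) * w ξ * ‖ξ - η‖ := by rw [pow_succ]; nlinarith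

end Difference

theorem jap_pos (ξ : V3) : 0 < jap ξ := Real.sqrt_pos.2 (by positivity)

theorem norm_le_jap (ξ : V3) : ‖ξ‖ ≤ jap ξ :=
  Real.le_sqrt_of_sq_le (by linarith)

theorem jap_le_jap {ξ η : V3} (h : ‖η‖ ≤ ‖ξ‖) : jap η ≤ jap ξ := by
  unfold jap; gcongr

theorem contDiff_jap {n : WithTop ℕ∞} : ContDiff ℝ n jap :=
  (contDiff_const.add (contDiff_norm_sq ℝ)).sqrt fun _ => by positivity

theorem jap_eq_norm_toLp (ξ : V3) : jap ξ = ‖WithLp.toLp 2 (ξ, Real.sqrt 2)‖ := by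
  rw [jap, WithLp.prod_norm_eq_of_L2]
  simp [add_comm]

theorem exists_norm_iteratedFDeriv_jap_mul_pow_le (n : ℕ) :
    ∃ C > 0, ∀ ξ : V3, ‖iteratedFDeriv ℝ n jap ξ‖ * jap ξ ^ n ≤ C * jap ξ := by
  obtain ⟨C, hC, hbound⟩ := exists_norm_iteratedFDeriv_norm_mul_pow_le (E := WithLp 2 (V3 × ℝ)) n
  let L : V3 →L[ℝ] WithLp 2 (V3 × ℝ) :=
    (WithLp.prodContinuousLinearEquiv 2 ℝ V3 ℝ).symm.toContinuousLinearMap ∘L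
      ContinuousLinearMap.inl ℝ V3 ℝ
  let c : WithLp 2 (V3 × ℝ) := WithLp.toLp 2 (0, Real.sqrt 2)
  have hjap (ξ : V3) : jap ξ = ‖L ξ + c‖ := by
    rw [jap_eq_norm_toLp]
    congr 1
    simp [L, c, ← WithLp.toLp_add]
  have hL : ‖L‖ ≤ 1 := L.opNorm_le_bound zero_le_one fun ξ => by simp [L]
  refine ⟨C, hC, fun ξ => ?_⟩
  have hξ : L ξ + c ≠ 0 := norm_pos_iff.1 (hjap ξ ▸ jap_pos ξ)
  calc ‖iteratedFDeriv ℝ n jap ξ‖ * jap ξ ^ n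
      ≤ ‖iteratedFDeriv ℝ n (‖·‖) (L ξ + c)‖ * ‖L ξ + c‖ ^ n := by
        rw [hjap ξ, funext hjap]
        gcongr
        exact norm_iteratedFDeriv_comp_affine_le isOpen_compl_singleton
          (fun y hy => (contDiffAt_norm ℝ hy).contDiffWithinAt) L hL c hξ
    _ ≤ C * jap ξ := hjap ξ ▸ hbound _ hξ

theorem contDiffAt_Hfun {n : WithTop ℕ∞} {ξ : V3} (hξ : ξ ≠ 0) : ContDiffAt ℝ n Hfun ξ :=
  (contDiffAt_norm ℝ hξ).mul contDiff_jap.contDiffAt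

theorem exists_norm_iteratedFDeriv_succ_Hfun_mul_pow_le (n : ℕ) :
    ∃ C > 0, ∀ ξ : V3, ξ ≠ 0 → ‖iteratedFDeriv ℝ (n + 1) Hfun ξ‖ * ‖ξ‖ ^ n ≤ C * jap ξ := by
  choose A hA hnorm using exists_norm_iteratedFDeriv_norm_mul_pow_le (E := V3)
  choose B hB hjap using exists_norm_iteratedFDeriv_jap_mul_pow_le
  refine ⟨∑ i ∈ Finset.range (n + 2), (n + 1).choose i * A i * B (n + 1 - i), ?_, fun ξ hξ => ?_⟩
  · refine Finset.sum_pos (fun i hi => ?_) Finset.nonempty_range_add_one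
    have := Nat.choose_pos (Nat.lt_succ_iff.1 (Finset.mem_range.1 hi))
    have := hA i
    have := hB (n + 1 - i)
    positivity
  have hξ0 : 0 < ‖ξ‖ := norm_pos_iff.2 hξ
  have hjapξ (i : ℕ) : ‖iteratedFDeriv ℝ i jap ξ‖ * ‖ξ‖ ^ i ≤ B i * jap ξ :=
    le_trans (by gcongr; exact norm_le_jap ξ) (hjap i ξ)
  have hleib := norm_iteratedFDeriv_mul_mul_pow_le (f := (‖·‖)) (g := jap)
    isOpen_compl_singleton (fun y hy => (contDiffAt_norm ℝ hy).contDiffWithinAt)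
    contDiff_jap.contDiffOn hξ (n := n + 1) hξ0.le (fun i _ => hnorm i ξ hξ) (fun i _ => hjapξ i)
  refine le_of_mul_le_mul_right ?_ hξ0
  calc ‖iteratedFDeriv ℝ (n + 1) Hfun ξ‖ * ‖ξ‖ ^ n * ‖ξ‖
      = ‖iteratedFDeriv ℝ (n + 1) Hfun ξ‖ * ‖ξ‖ ^ (n + 1) := by ring
    _ ≤ _ := hleib
    _ = _ := by ring

/-- Higher-derivative estimates for `H(ξ) = |ξ|√(2+|ξ|²)`: for each `k ≥ 1`,
`‖∇^k H(ξ)‖ ≲ ⟨ξ⟩/|ξ|^{k-1}` and, for `|ξ| ≥ |η|`,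
`‖∇^k H(ξ) - ∇^k H(η)‖ ≲ ⟨ξ⟩|ξ-η|/(|ξ||η|^{k-1})`. -/
theorem iteratedFDeriv_Hfun_bounds (k : ℕ) (hk : 1 ≤ k) :
    ∃ C : ℝ, 0 < C ∧
      (∀ ξ : V3, ξ ≠ 0 →
        ‖iteratedFDeriv ℝ k Hfun ξ‖ ≤ C * jap ξ / ‖ξ‖ ^ (k - 1)) ∧
      (∀ ξ η : V3, ξ ≠ 0 → η ≠ 0 → ‖η‖ ≤ ‖ξ‖ →
        ‖iteratedFDeriv ℝ k Hfun ξ - iteratedFDeriv ℝ k Hfun η‖ ≤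
          C * jap ξ * ‖ξ - η‖ / (‖ξ‖ * ‖η‖ ^ (k - 1))) := by
  obtain ⟨m, rfl⟩ : ∃ m, k = m + 1 := ⟨k - 1, by omega⟩
  obtain ⟨A, hA, hHA⟩ := exists_norm_iteratedFDeriv_succ_Hfun_mul_pow_le m
  obtain ⟨B, hB, hHB⟩ := exists_norm_iteratedFDeriv_succ_Hfun_mul_pow_le (m + 1)
  set C := max A B
  have hw (x y : V3) (h : ‖x‖ ≤ ‖y‖) : C * jap x ≤ C * jap y := by
    gcongr
    exact jap_le_jap h
  have hF (ζ : V3) (hζ : ζ ≠ 0) : ‖iteratedFDeriv ℝ (m + 1) Hfun ζ‖ * ‖ζ‖ ^ m ≤ C * jap ζ :=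
    (hHA ζ hζ).trans (mul_le_mul_of_nonneg_right (le_max_left A B) (jap_pos ζ).le)
  have hdF (ζ : V3) (hζ : ζ ≠ 0) :
      ‖fderiv ℝ (iteratedFDeriv ℝ (m + 1) Hfun) ζ‖ * ‖ζ‖ ^ (m + 1) ≤ C * jap ζ := by
    rw [norm_fderiv_iteratedFDeriv]
    exact (hHB ζ hζ).trans (mul_le_mul_of_nonneg_right (le_max_right A B) (jap_pos ζ).le)
  have hdiff (ζ : V3) (hζ : ζ ≠ 0) : DifferentiableAt ℝ (iteratedFDeriv ℝ (m + 1) Hfun) ζ :=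
    (contDiffAt_Hfun (n := ∞) hζ).differentiableAt_iteratedFDeriv
      (by exact_mod_cast ENat.natCast_lt_top (m + 1))
  refine ⟨3 * 2 ^ (m + 1) * C, by positivity, fun ξ hξ => ?_, fun ξ η _ hη hle => ?_⟩
  · rw [Nat.add_sub_cancel, le_div_iff₀ (by positivity)]
    have hC : 0 ≤ C * jap ξ := mul_nonneg (le_max_of_le_left hA.le) (jap_pos ξ).le
    have h2 : (1 : ℝ) ≤ 2 ^ (m + 1) := one_le_pow₀ one_le_two
    nlinarith [hF ξ hξ]
  · rw [Nat.add_sub_cancel, le_div_iff₀ (by positivity)]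
    exact (norm_sub_mul_le_of_norm_fderiv_mul_pow_le hw hF hdiff hdF hη hle).trans_eq (by ring)
end
end
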